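/- arXiv:2203.06334 — 3 statements merged into one kernel-verified Lean document; each statement's English description precedes it below -/
import Mathlib

section
/- (Warnock's formula for the L₂ discrepancy.) Let s ≥ 1, n ≥ 1, and let P = (x_1, …, x_n) be points in [0,1]^s with x_i = (x_{i1},…,x_{is}). Then the squared L₂ discrepancy satisfies ∫_{[0,1]^s} ( N(P, [0,x))/n − ∏_{l=1}^s x_l )² dx = 3^{−s} − (2^{1−s}/n)·Σ_{i=1}^n ∏_{l=1}^s (1 − x_{il}²) + (1/n²)·Σ_{i=1}^n Σ_{j=1}^n ∏_{l=1}^s (1 − max(x_{il}, x_{jl})), where N(P, [0,x)) is the number of indices i with x_{il} < x_l for every l = 1,…,s. -/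
/-!
Expanding the square, the count `N(P, [0,x)) = ∑ᵢ ∏ₗ 1[P i l < x l]` makes each of the three
terms a finite sum of products of functions of one coordinate each, so Fubini reduces the
integral, for any product of a finite measure with a second moment, to the one-dimensional
integrals `∫ t²`, `∫_{t > a} t` and `∫ 1[a < t] 1[b < t] = μ (max a b, ∞)`. For the uniform
measure on `[0,1]` these are `1/3`, `(1 - a²)/2` and `1 - max a b`.
-/

open MeasureTheory Finset Set

lemma ite_lt_mul_ite_lt {α R : Type*} [LinearOrder α] [MulZeroOneClass R] (a b t : α) :
    ((if a < t then 1 else 0) * (if b < t then 1 else 0) : R) = if max a b < t then 1 else 0 := by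
  by_cases ha : a < t <;> by_cases hb : b < t <;> simp [ha, hb]

lemma card_filter_forall_lt_eq_sum_prod {ι σ α : Type*} [Fintype ι] [Fintype σ] [LT α]
    [DecidableLT α] (P : ι → σ → α) (x : σ → α) [DecidablePred fun i => ∀ l, P i l < x l] :
    ((univ.filter fun i => ∀ l, P i l < x l).card : ℝ) =
      ∑ i, ∏ l, if P i l < x l then 1 else 0 := by
  rw [card_filter]
  push_cast
  simp [prod_boole]

lemma discrepancy_sq_eq {ι σ : Type*} [Fintype ι] [Fintype σ] (n : ℝ) (P : ι → σ → ℝ)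
    (x : σ → ℝ) [DecidablePred fun i => ∀ l, P i l < x l] :
    (((univ.filter fun i => ∀ l, P i l < x l).card : ℝ) / n - ∏ l, x l) ^ 2
      = 1 / n ^ 2 * ∑ i, ∑ j, ∏ l, (if max (P i l) (P j l) < x l then 1 else 0)
        - 2 / n * ∑ i, ∏ l, ((if P i l < x l then 1 else 0) * x l) + ∏ l, x l ^ 2 := by
  simp only [card_filter_forall_lt_eq_sum_prod, ← ite_lt_mul_ite_lt, prod_mul_distrib,
    Finset.prod_pow, ← sum_mul_sum, ← sum_mul]
  ring

lemma integral_ite_lt (μ : Measure ℝ) (a : ℝ) :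
    ∫ t, (if a < t then 1 else 0) ∂μ = μ.real (Ioi a) := by
  rw [← integral_indicator_one measurableSet_Ioi]
  rfl

lemma integral_ite_lt_mul (μ : Measure ℝ) (a : ℝ) :
    ∫ t, (if a < t then 1 else 0) * t ∂μ = ∫ t in Ioi a, t ∂μ := by
  rw [← integral_indicator measurableSet_Ioi]
  congr 1 with t
  simp [indicator_apply]

lemma integrable_ite_lt (μ : Measure ℝ) [IsFiniteMeasure μ] (a : ℝ) :
    Integrable (fun t => if a < t then (1 : ℝ) else 0) μ :=
  (integrable_const (1 : ℝ)).indicator (s := Ioi a) measurableSet_Ioi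

lemma integrable_ite_lt_mul {μ : Measure ℝ} (h : Integrable (fun t => t) μ) (a : ℝ) :
    Integrable (fun t => (if a < t then (1 : ℝ) else 0) * t) μ := by
  refine (h.indicator (s := Ioi a) measurableSet_Ioi).congr (.of_forall fun t => ?_)
  simp [indicator_apply]

theorem integral_discrepancy_sq {ι σ : Type*} [Fintype ι] [Fintype σ] (μ : Measure ℝ)
    [IsFiniteMeasure μ] (hμ : Integrable (fun t => t ^ 2) μ) (n : ℝ) (P : ι → σ → ℝ)
    [∀ x : σ → ℝ, DecidablePred fun i => ∀ l, P i l < x l] :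
    ∫ x : σ → ℝ, (((univ.filter fun i => ∀ l, P i l < x l).card : ℝ) / n - ∏ l, x l) ^ 2
        ∂Measure.pi (fun _ => μ)
      = 1 / n ^ 2 * ∑ i, ∑ j, ∏ l, μ.real (Ioi (max (P i l) (P j l)))
        - 2 / n * ∑ i, ∏ l, ∫ t in Ioi (P i l), t ∂μ + (∫ t, t ^ 2 ∂μ) ^ Fintype.card σ := by
  have hid : Integrable (fun t : ℝ => t) μ :=
    ((memLp_two_iff_integrable_sq aestronglyMeasurable_id).2 hμ).integrable one_le_two
  have h₁ (i j : ι) : Integrable (fun x : σ → ℝ =>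
      ∏ l, if max (P i l) (P j l) < x l then (1 : ℝ) else 0) (Measure.pi fun _ => μ) :=
    .fintype_prod fun l => integrable_ite_lt μ _
  have h₂ (i : ι) : Integrable (fun x : σ → ℝ =>
      ∏ l, (if P i l < x l then (1 : ℝ) else 0) * x l) (Measure.pi fun _ => μ) :=
    .fintype_prod (f := fun l t => (if P i l < t then (1 : ℝ) else 0) * t)
      fun l => integrable_ite_lt_mul hid _
  have e₁ (i : ι) : ∫ x : σ → ℝ, ∑ j, ∏ l, (if max (P i l) (P j l) < x l then (1 : ℝ) else 0)
      ∂Measure.pi (fun _ => μ) = ∑ j, ∏ l, μ.real (Ioi (max (P i l) (P j l))) := by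
    rw [integral_finsetSum _ fun j _ => h₁ i j]
    refine sum_congr rfl fun j _ => ?_
    rw [integral_fintype_prod_eq_prod (fun l t => if max (P i l) (P j l) < t then 1 else 0)]
    simp only [integral_ite_lt]
  have e₂ (i : ι) : ∫ x : σ → ℝ, ∏ l, (if P i l < x l then (1 : ℝ) else 0) * x l
      ∂Measure.pi (fun _ => μ) = ∏ l, ∫ t in Ioi (P i l), t ∂μ := by
    rw [integral_fintype_prod_eq_prod (fun l t => (if P i l < t then 1 else 0) * t)]
    simp only [integral_ite_lt_mul]
  have hA := (integrable_finsetSum univ fun i _ =>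
    integrable_finsetSum univ fun j _ => h₁ i j).const_mul (1 / n ^ 2)
  have hB := (integrable_finsetSum univ fun i _ => h₂ i).const_mul (2 / n)
  simp_rw [discrepancy_sq_eq]
  rw [integral_add ?_ (.fintype_prod fun _ => hμ), integral_sub hA hB, integral_const_mul,
    integral_const_mul, integral_finsetSum _ fun i _ => integrable_finsetSum _ fun j _ => h₁ i j,
    integral_finsetSum _ fun i _ => h₂ i, integral_fintype_prod_eq_pow (fun t => t ^ 2)]
  · simp only [e₁, e₂]
  · exact hA.sub hB

lemma Ioi_inter_Icc_of_mem {α : Type*} [LinearOrder α] {a b c : α} (ha : a ∈ Icc b c) :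
    Ioi a ∩ Icc b c = Ioc a c := by
  ext t
  simp only [mem_inter_iff, Set.mem_Ioi, Set.mem_Icc, Set.mem_Ioc]
  grind

lemma measureReal_restrict_Icc_Ioi {a b c : ℝ} (ha : a ∈ Icc b c) :
    (volume.restrict (Icc b c)).real (Ioi a) = c - a := by
  rw [measureReal_restrict_apply measurableSet_Ioi, Ioi_inter_Icc_of_mem ha, Real.volume_real_Ioc,
    max_eq_left (sub_nonneg.2 ha.2)]

lemma setIntegral_Ioi_id_restrict_Icc {a b c : ℝ} (ha : a ∈ Icc b c) :
    ∫ t in Ioi a, t ∂volume.restrict (Icc b c) = (c ^ 2 - a ^ 2) / 2 := by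
  rw [Measure.restrict_restrict measurableSet_Ioi, Ioi_inter_Icc_of_mem ha,
    ← intervalIntegral.integral_of_le ha.2, integral_id]

lemma integral_Icc_sq {b c : ℝ} (h : b ≤ c) : ∫ t in Icc b c, t ^ 2 = (c ^ 3 - b ^ 3) / 3 := by
  rw [integral_Icc_eq_integral_Ioc, ← intervalIntegral.integral_of_le h, integral_pow]
  norm_num

open scoped Classical in
theorem warnock_formula_general (s n : ℕ)
    (P : Fin n → Fin s → ℝ) (hP : ∀ i l, P i l ∈ Set.Icc (0 : ℝ) 1) :
    (∫ x : Fin s → ℝ,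
        (((Finset.univ.filter fun i => ∀ l, P i l < x l).card : ℝ) / n - ∏ l, x l) ^ 2
        ∂(Measure.pi fun _ : Fin s => volume.restrict (Set.Icc (0 : ℝ) 1)))
      = ((3 : ℝ) ^ s)⁻¹
        - (2 : ℝ) ^ (1 - (s : ℤ)) / n * ∑ i, ∏ l, (1 - P i l ^ 2)
        + 1 / (n : ℝ) ^ 2 * ∑ i, ∑ j, ∏ l, (1 - max (P i l) (P j l)) := by
  have hmax (i j l) : max (P i l) (P j l) ∈ Icc (0 : ℝ) 1 :=
    ⟨le_max_of_le_left (hP i l).1, max_le (hP i l).2 (hP j l).2⟩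
  rw [integral_discrepancy_sq (volume.restrict (Icc 0 1)) (continuous_pow 2).integrableOn_Icc n P,
    integral_Icc_sq zero_le_one, Fintype.card_fin]
  simp only [measureReal_restrict_Icc_Ioi (hmax _ _ _), setIntegral_Ioi_id_restrict_Icc (hP _ _),
    one_pow, zero_pow three_ne_zero, sub_zero, one_div, inv_pow, prod_div_distrib, prod_const,
    card_univ, Fintype.card_fin, ← sum_div]
  rw [zpow_sub₀ two_ne_zero, zpow_one, zpow_natCast]
  ring

open scoped Classical in
/-- **Warnock's formula** for the squared `L₂` discrepancy of `n` points in `[0,1]^s`. -/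
theorem warnock_formula (s n : ℕ) (hs : 1 ≤ s) (hn : 1 ≤ n)
    (P : Fin n → Fin s → ℝ) (hP : ∀ i l, P i l ∈ Set.Icc (0 : ℝ) 1) :
    (∫ x : Fin s → ℝ,
        (((Finset.univ.filter fun i => ∀ l, P i l < x l).card : ℝ) / n - ∏ l, x l) ^ 2
        ∂(Measure.pi fun _ : Fin s => volume.restrict (Set.Icc (0 : ℝ) 1)))
      = ((3 : ℝ) ^ s)⁻¹
        - (2 : ℝ) ^ (1 - (s : ℤ)) / n * ∑ i, ∏ l, (1 - P i l ^ 2)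
        + 1 / (n : ℝ) ^ 2 * ∑ i, ∑ j, ∏ l, (1 - max (P i l) (P j l)) :=
  warnock_formula_general s n P hP
end

section
/- (Closed form of the modified L₂ discrepancy.) Let s ≥ 1, n ≥ 1, and let P = (x_1,…,x_n) be points in [0,1]^s with x_i = (x_{i1},…,x_{is}). Then Σ_{∅ ≠ u ⊆ {1,…,s}} ∫_{[0,1]^{|u|}} ( N_u(P, x_u)/n − ∏_{l∈u} x_l )² dx_u = (4/3)^s − (2^{1−s}/n)·Σ_{i=1}^n ∏_{l=1}^s (3 − x_{il}²) + (1/n²)·Σ_{i=1}^n Σ_{j=1}^n ∏_{l=1}^s (2 − max(x_{il}, x_{jl})), where for a nonempty subset u of {1,…,s} and x_u = (x_l)_{l∈u} ∈ [0,1]^{|u|}, N_u(P, x_u) is the number of indices i with x_{il} < x_l for every l ∈ u. -/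
/-!
Writing the counting function as `N(x) = ∑ᵢ ∏ₗ 1[xᵢₗ < xₗ]`, the squared local discrepancy
expands into products over the coordinates of the one-dimensional functions
`1[max(xᵢₗ, xⱼₗ) < t]`, `t · 1[xᵢₗ < t]` and `t²`, so by Fubini its integral is a combination of
products of `1 - max(xᵢₗ, xⱼₗ)`, `(1 - xᵢₗ²)/2` and `1/3`. Summing `∏_{l ∈ u} aₗ` over the
nonempty `u` gives `∏ₗ (1 + aₗ) - 1`, which turns these factors into `2 - max(xᵢₗ, xⱼₗ)`,
`(3 - xᵢₗ²)/2` and `4/3`.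
-/

open MeasureTheory Set Finset

theorem Set.Icc_inter_Ioi_of_le {α : Type*} [LinearOrder α] {a b c : α} (h : a ≤ c) :
    Icc a b ∩ Ioi c = Ioc c b :=
  Set.ext fun _ => ⟨fun ⟨hab, hc⟩ => ⟨hc, hab.2⟩, fun ⟨hc, hb⟩ => ⟨⟨h.trans hc.le, hb⟩, hc⟩⟩

theorem Finset.sum_powerset_filter_nonempty_prod {ι R : Type*} [CommRing R] (s : Finset ι)
    (a : ι → R) :
    ∑ u ∈ s.powerset.filter Finset.Nonempty, ∏ l ∈ u, a l = ∏ l ∈ s, (1 + a l) - 1 := by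
  have hempty : s.powerset.filter (¬ ·.Nonempty) = {∅} := by
    ext u; simp +contextual [not_nonempty_iff_eq_empty]
  rw [prod_one_add, eq_sub_iff_add_eq, ← sum_filter_add_sum_filter_not s.powerset Finset.Nonempty,
    hempty, sum_singleton, prod_empty]

section UnitInterval

variable {c : ℝ}

theorem setIntegral_Icc_indicator_Ioi_one (hc : c ∈ Icc (0 : ℝ) 1) :
    ∫ t in Icc (0 : ℝ) 1, (Ioi c).indicator 1 t = 1 - c := by
  rw [setIntegral_indicator measurableSet_Ioi, Icc_inter_Ioi_of_le hc.1,
    ← intervalIntegral.integral_of_le hc.2]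
  simp

theorem setIntegral_Icc_indicator_Ioi_id (hc : c ∈ Icc (0 : ℝ) 1) :
    ∫ t in Icc (0 : ℝ) 1, (Ioi c).indicator id t = (1 - c ^ 2) / 2 := by
  rw [setIntegral_indicator measurableSet_Ioi, Icc_inter_Ioi_of_le hc.1,
    ← intervalIntegral.integral_of_le hc.2]
  simp

theorem setIntegral_Icc_sq : ∫ t in Icc (0 : ℝ) 1, t ^ 2 = 1 / 3 := by
  rw [integral_Icc_eq_integral_Ioc, ← intervalIntegral.integral_of_le zero_le_one]
  norm_num

end UnitInterval

theorem indicator_Ioi_one_mul_indicator_Ioi_one {α M : Type*} [LinearOrder α] [MulZeroOneClass M]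
    (a b t : α) :
    (Ioi a).indicator 1 t * (Ioi b).indicator 1 t = (Ioi (max a b)).indicator (1 : α → M) t := by
  rw [← Ioi_inter_Ioi, inter_indicator_one, Pi.mul_apply]

theorem indicator_Ioi_one_mul_self {R : Type*} [LinearOrder R] [MulZeroOneClass R] (a t : R) :
    (Ioi a).indicator 1 t * t = (Ioi a).indicator id t := by
  simp [indicator_apply]

section LocalDiscrepancy

variable {ι : Type*} [Fintype ι]

open scoped Classical in
theorem card_filter_forall_lt_eq_sum_prod_indicator {κ α : Type*} [Fintype κ] [LinearOrder α]
    (Q : κ → ι → α) (x : ι → α) :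
    ((univ.filter fun i => ∀ l, Q i l < x l).card : ℝ)
      = ∑ i, ∏ l, (Ioi (Q i l)).indicator 1 (x l) := by
  simp only [natCast_card_filter, indicator_apply, Set.mem_Ioi, Pi.one_apply, prod_boole,
    Finset.mem_univ, forall_const]

open scoped Classical in
theorem sq_localDiscrepancy_eq {n : ℕ} (Q : Fin n → ι → ℝ) (x : ι → ℝ) :
    (((univ.filter fun i => ∀ l, Q i l < x l).card : ℝ) / n - ∏ l, x l) ^ 2
      = 1 / (n : ℝ) ^ 2 * ∑ i, ∑ j, ∏ l, (Ioi (max (Q i l) (Q j l))).indicator 1 (x l)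
        - 2 / n * ∑ i, ∏ l, (Ioi (Q i l)).indicator id (x l)
        + ∏ l, x l ^ 2 := by
  have hcount_sq : (∑ i, ∏ l, (Ioi (Q i l)).indicator 1 (x l)) ^ 2
      = ∑ i, ∑ j, ∏ l, (Ioi (max (Q i l) (Q j l))).indicator (1 : ℝ → ℝ) (x l) := by
    simp only [sq, sum_mul_sum, ← prod_mul_distrib, indicator_Ioi_one_mul_indicator_Ioi_one]
  have hcount_mul : (∑ i, ∏ l, (Ioi (Q i l)).indicator 1 (x l)) * ∏ l, x l
      = ∑ i, ∏ l, (Ioi (Q i l)).indicator id (x l) := by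
    simp only [sum_mul, ← prod_mul_distrib, indicator_Ioi_one_mul_self]
  rw [card_filter_forall_lt_eq_sum_prod_indicator, ← hcount_sq, ← hcount_mul, Finset.prod_pow]
  ring

local notation "μ₀" => volume.restrict (Icc (0 : ℝ) 1)

theorem integral_pi_prod_indicator_Ioi_one {c : ι → ℝ} (hc : ∀ l, c l ∈ Icc (0 : ℝ) 1) :
    ∫ x, ∏ l, (Ioi (c l)).indicator 1 (x l) ∂(Measure.pi fun _ : ι => μ₀) = ∏ l, (1 - c l) := by
  rw [integral_fintype_prod_eq_prod]
  exact prod_congr rfl fun l _ => setIntegral_Icc_indicator_Ioi_one (hc l)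

theorem integral_pi_prod_indicator_Ioi_id {c : ι → ℝ} (hc : ∀ l, c l ∈ Icc (0 : ℝ) 1) :
    ∫ x, ∏ l, (Ioi (c l)).indicator id (x l) ∂(Measure.pi fun _ : ι => μ₀)
      = ∏ l, ((1 - c l ^ 2) / 2) := by
  rw [integral_fintype_prod_eq_prod]
  exact prod_congr rfl fun l _ => setIntegral_Icc_indicator_Ioi_id (hc l)

theorem integral_pi_prod_sq :
    ∫ x, ∏ l, x l ^ 2 ∂(Measure.pi fun _ : ι => μ₀) = ∏ _l : ι, (1 / 3 : ℝ) := by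
  rw [integral_fintype_prod_eq_prod (f := fun _ t => t ^ 2)]
  exact prod_congr rfl fun _ _ => setIntegral_Icc_sq

open scoped Classical in
theorem integral_sq_localDiscrepancy {n : ℕ} (Q : Fin n → ι → ℝ)
    (hQ : ∀ i l, Q i l ∈ Icc (0 : ℝ) 1) :
    ∫ x, (((univ.filter fun i => ∀ l, Q i l < x l).card : ℝ) / n - ∏ l, x l) ^ 2
        ∂(Measure.pi fun _ : ι => μ₀)
      = 1 / (n : ℝ) ^ 2 * ∑ i, ∑ j, ∏ l, (1 - max (Q i l) (Q j l))
        - 2 / n * ∑ i, ∏ l, ((1 - Q i l ^ 2) / 2)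
        + ∏ _l : ι, (1 / 3 : ℝ) := by
  have hone_int : ∀ i j, Integrable (fun x : ι → ℝ =>
      ∏ l, (Ioi (max (Q i l) (Q j l))).indicator (1 : ℝ → ℝ) (x l)) (Measure.pi fun _ => μ₀) :=
    fun i j => .fintype_prod fun _ => (integrable_const 1).indicator measurableSet_Ioi
  have hid_int : ∀ i, Integrable (fun x : ι → ℝ =>
      ∏ l, (Ioi (Q i l)).indicator id (x l)) (Measure.pi fun _ => μ₀) :=
    fun i => .fintype_prod fun _ => continuous_id.integrableOn_Icc.indicator measurableSet_Ioi
  have hcount_sq_int : Integrable (fun x : ι → ℝ => 1 / (n : ℝ) ^ 2 *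
      ∑ i, ∑ j, ∏ l, (Ioi (max (Q i l) (Q j l))).indicator (1 : ℝ → ℝ) (x l))
      (Measure.pi fun _ => μ₀) :=
    (integrable_finsetSum _ fun i _ => integrable_finsetSum _ fun j _ => hone_int i j).const_mul _
  have hcount_mul_int : Integrable (fun x : ι → ℝ => 2 / (n : ℝ) *
      ∑ i, ∏ l, (Ioi (Q i l)).indicator id (x l)) (Measure.pi fun _ => μ₀) :=
    (integrable_finsetSum _ fun i _ => hid_int i).const_mul _
  have hsq_int : Integrable (fun x : ι → ℝ => ∏ l, x l ^ 2) (Measure.pi fun _ => μ₀) :=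
    .fintype_prod (f := fun _ t => t ^ 2) fun _ => (continuous_pow 2).integrableOn_Icc
  have hsum_one : ∀ i, ∫ x, ∑ j, ∏ l, (Ioi (max (Q i l) (Q j l))).indicator 1 (x l)
      ∂(Measure.pi fun _ : ι => μ₀) = ∑ j, ∏ l, (1 - max (Q i l) (Q j l)) := fun i => by
    rw [integral_finsetSum _ fun j _ => hone_int i j]
    exact sum_congr rfl fun j _ => integral_pi_prod_indicator_Ioi_one fun l =>
      ⟨(hQ i l).1.trans (le_max_left _ _), max_le (hQ i l).2 (hQ j l).2⟩
  simp_rw [sq_localDiscrepancy_eq]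
  rw [integral_add ?_ hsq_int,
    integral_sub hcount_sq_int hcount_mul_int, integral_const_mul, integral_const_mul,
    integral_finsetSum _ fun i _ => hid_int i,
    integral_finsetSum _ fun i _ => integrable_finsetSum _ fun j _ => hone_int i j]
  · simp only [hsum_one, integral_pi_prod_indicator_Ioi_id (hQ _), integral_pi_prod_sq]
  · exact hcount_sq_int.sub hcount_mul_int

theorem sum_powerset_filter_nonempty_localDiscrepancy_terms {n : ℕ} (Q : Fin n → ι → ℝ) :
    ∑ u ∈ univ.powerset.filter Finset.Nonempty,
        (1 / (n : ℝ) ^ 2 * ∑ i, ∑ j, ∏ l ∈ u, (1 - max (Q i l) (Q j l))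
          - 2 / n * ∑ i, ∏ l ∈ u, ((1 - Q i l ^ 2) / 2) + ∏ _l ∈ u, (1 / 3 : ℝ))
      = 1 / (n : ℝ) ^ 2 * ∑ i, ∑ j, (∏ l, (2 - max (Q i l) (Q j l)) - 1)
          - 2 / n * ∑ i, (∏ l, ((3 - Q i l ^ 2) / 2) - 1) + ((4 / 3) ^ Fintype.card ι - 1) := by
  have hcount_sq : ∑ u ∈ univ.powerset.filter Finset.Nonempty, ∑ i, ∑ j,
      ∏ l ∈ u, (1 - max (Q i l) (Q j l)) = ∑ i, ∑ j, (∏ l, (2 - max (Q i l) (Q j l)) - 1) := by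
    rw [sum_comm]
    refine sum_congr rfl fun i _ => ?_
    rw [sum_comm]
    refine sum_congr rfl fun j _ => ?_
    rw [sum_powerset_filter_nonempty_prod]
    ring_nf
  have hcount_mul : ∑ u ∈ univ.powerset.filter Finset.Nonempty, ∑ i,
      ∏ l ∈ u, ((1 - Q i l ^ 2) / 2) = ∑ i, (∏ l, ((3 - Q i l ^ 2) / 2) - 1) := by
    rw [sum_comm]
    refine sum_congr rfl fun i _ => ?_
    rw [sum_powerset_filter_nonempty_prod]
    ring_nf
  have hsq : ∑ u ∈ (univ : Finset ι).powerset.filter Finset.Nonempty, ∏ _l ∈ u, (1 / 3 : ℝ)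
      = (4 / 3) ^ Fintype.card ι - 1 := by
    rw [sum_powerset_filter_nonempty_prod, prod_const, card_univ]
    norm_num [div_pow]
  rw [sum_add_distrib, sum_sub_distrib, ← mul_sum, ← mul_sum, hcount_sq, hcount_mul, hsq]

end LocalDiscrepancy

open scoped Classical in
theorem modified_L2_discrepancy_formula_general (s n : ℕ) (hn : 1 ≤ n)
    (P : Fin n → Fin s → ℝ) (hP : ∀ i l, P i l ∈ Set.Icc (0 : ℝ) 1) :
    (∑ u ∈ (Finset.univ : Finset (Fin s)).powerset.filter Finset.Nonempty,
        ∫ xu : { l // l ∈ u } → ℝ,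
          (((Finset.univ.filter fun i => ∀ l : { l // l ∈ u }, P i l < xu l).card : ℝ) / n
              - ∏ l : { l // l ∈ u }, xu l) ^ 2
          ∂(Measure.pi fun _ : { l // l ∈ u } => volume.restrict (Set.Icc (0 : ℝ) 1)))
      = (4 / 3 : ℝ) ^ s
        - (2 : ℝ) ^ (1 - (s : ℤ)) / n * ∑ i, ∏ l, (3 - P i l ^ 2)
        + 1 / (n : ℝ) ^ 2 * ∑ i, ∑ j, ∏ l, (2 - max (P i l) (P j l)) := by
  have hn0 : (n : ℝ) ≠ 0 := Nat.cast_ne_zero.mpr (Nat.one_le_iff_ne_zero.mp hn)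
  calc _ = ∑ u ∈ univ.powerset.filter Finset.Nonempty,
        (1 / (n : ℝ) ^ 2 * ∑ i, ∑ j, ∏ l ∈ u, (1 - max (P i l) (P j l))
          - 2 / n * ∑ i, ∏ l ∈ u, ((1 - P i l ^ 2) / 2) + ∏ _l ∈ u, (1 / 3 : ℝ)) :=
        sum_congr rfl fun u _ => by
          rw [integral_sq_localDiscrepancy (fun i (l : u) => P i l) fun i l => hP i l]
          -- rewritten backwards: forwards, simp would have to match `?f ↑l`
          simp only [← prod_coe_sort u]
    _ = 1 / (n : ℝ) ^ 2 * ∑ i, ∑ j, (∏ l, (2 - max (P i l) (P j l)) - 1)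
          - 2 / n * ∑ i, (∏ l, ((3 - P i l ^ 2) / 2) - 1) + ((4 / 3) ^ s - 1) := by
        rw [sum_powerset_filter_nonempty_localDiscrepancy_terms, Fintype.card_fin]
    _ = _ := by
        simp only [sum_sub_distrib, sum_const, card_univ, Fintype.card_fin, nsmul_eq_mul, mul_one,
          prod_div_distrib, prod_const, ← sum_div]
        rw [zpow_sub₀ two_ne_zero, zpow_one, zpow_natCast]
        field_simp
        ring

open scoped Classical in
/-- **Closed form of the modified `L₂` discrepancy**: summing, over all nonempty
subsets `u` of the coordinates, the integrated squared local discrepancy of the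
projection of the points onto the coordinates in `u` gives
`(4/3)^s - (2^{1-s}/n)·Σ_i ∏_l (3 - x_{il}²) + (1/n²)·Σ_i Σ_j ∏_l (2 - max(x_{il}, x_{jl}))`. -/
theorem modified_L2_discrepancy_formula (s n : ℕ) (hs : 1 ≤ s) (hn : 1 ≤ n)
    (P : Fin n → Fin s → ℝ) (hP : ∀ i l, P i l ∈ Set.Icc (0 : ℝ) 1) :
    (∑ u ∈ (Finset.univ : Finset (Fin s)).powerset.filter Finset.Nonempty,
        ∫ xu : { l // l ∈ u } → ℝ,
          (((Finset.univ.filter fun i => ∀ l : { l // l ∈ u }, P i l < xu l).card : ℝ) / n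
              - ∏ l : { l // l ∈ u }, xu l) ^ 2
          ∂(Measure.pi fun _ : { l // l ∈ u } => volume.restrict (Set.Icc (0 : ℝ) 1)))
      = (4 / 3 : ℝ) ^ s
        - (2 : ℝ) ^ (1 - (s : ℤ)) / n * ∑ i, ∏ l, (3 - P i l ^ 2)
        + 1 / (n : ℝ) ^ 2 * ∑ i, ∑ j, ∏ l, (2 - max (P i l) (P j l)) :=
  modified_L2_discrepancy_formula_general s n hn P hP
end

section
/- (Closed form of the centered L₂ discrepancy.) Let s ≥ 1, n ≥ 1, and let P = (x_1,…,x_n) be points in [0,1]^s with x_i = (x_{i1},…,x_{is}). For x ∈ [0,1]^s let a(x) ∈ {0,1}^s be the vertex of the unit cube nearest to x (a_l = 1 if x_l > 1/2 and a_l = 0 if x_l ≤ 1/2), and for a nonempty u ⊆ {1,…,s} let J^u_x = ∏_{l∈u} [min(a_l, x_l), max(a_l, x_l)]. Then Σ_{∅ ≠ u ⊆ {1,…,s}} ∫_{[0,1]^{|u|}} ( N_u(P, J^u_x)/n − ∏_{l∈u} |x_l − a_l| )² dx_u = (13/12)^s − (2/n)·Σ_{i=1}^n ∏_{l=1}^s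 ( 1 + ½|x_{il} − ½| − ½|x_{il} − ½|² ) + (1/n²)·Σ_{i=1}^n Σ_{j=1}^n ∏_{l=1}^s ( 1 + ½|x_{il} − ½| + ½|x_{jl} − ½| − ½|x_{il} − x_{jl}| ), where N_u(P, J^u_x) is the number of indices i whose u-coordinates satisfy x_{il} ∈ [min(a_l,x_l), max(a_l,x_l)] for every l ∈ u. -/
/-!
Expanding the square, the integrand is a combination of products over `l ∈ u` of functions of
the single coordinate `x_l`, so by Fubini every integral over `[0,1]^u` is a product of
one-dimensional integrals. Writing `w(x) = |x - a(x)| = min x (1 - x)` and noting that, for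
`x, p ∈ [0,1]`, `p ∈ J_x` iff `x ∈ [p, 1/2] ∪ (1/2, p]`, these are
`∫ 1[p ∈ J_x] 1[q ∈ J_x] dx = (1/2 - max p q)⁺ + (min p q - 1/2)⁺ = (|p-½| + |q-½| - |p-q|)/2`,
`∫ 1[p ∈ J_x] w(x) dx = (|p-½| - |p-½|²)/2` and `∫ w² = 1/12`. Finally
`∑_{u ≠ ∅} ∏_{l ∈ u} c_l = ∏_l (1 + c_l) - 1`, and the constants left over,
`-(1/n²)·n² + (2/n)·n - 1`, cancel.
-/

open MeasureTheory Set

namespace Finset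

theorem sum_powerset_filter_nonempty_prod_s18 {ι R : Type*} [CommRing R] (s : Finset ι)
    (f : ι → R) :
    ∑ u ∈ s.powerset.filter Finset.Nonempty, ∏ l ∈ u, f l = ∏ l ∈ s, (1 + f l) - 1 := by
  classical
  have : s.powerset.filter Finset.Nonempty = s.powerset.erase ∅ := by
    ext u; simp [Finset.nonempty_iff_ne_empty, and_comm]
  rw [this, sum_erase_eq_sub (empty_mem_powerset s), prod_empty, prod_one_add]

theorem card_filter_forall_mem_eq_sum_prod_indicator {κ ι α R : Type*} [Fintype κ]
    [Fintype ι] [CommSemiring R] (P : κ → ι → α) (B : ι → Set α)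
    [DecidablePred fun i => ∀ l, P i l ∈ B l] :
    ((univ.filter fun i => ∀ l, P i l ∈ B l).card : R) = ∑ i, ∏ l, (B l).indicator 1 (P i l) := by
  classical
  simp only [card_filter, Nat.cast_sum, Nat.cast_ite, Nat.cast_one, Nat.cast_zero,
    indicator_apply, Pi.one_apply, Fintype.prod_boole]
  congr!

end Finset

section ProductMeasure

variable {ι α : Type*} [Fintype ι] [MeasurableSpace α] {μ : Measure α} [SigmaFinite μ]

theorem integral_pi_prod_mul_prod (f g : ι → α → ℝ) :
    ∫ x, (∏ l, f l (x l)) * ∏ l, g l (x l) ∂Measure.pi (fun _ => μ)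
      = ∏ l, ∫ y, f l y * g l y ∂μ := by
  simp_rw [← Finset.prod_mul_distrib]
  exact integral_fintype_prod_eq_prod (fun l y => f l y * g l y)

theorem integrable_pi_prod_mul_prod {f g : ι → α → ℝ} (hf : ∀ l, MemLp (f l) 2 μ)
    (hg : ∀ l, MemLp (g l) 2 μ) :
    Integrable (fun x => (∏ l, f l (x l)) * ∏ l, g l (x l)) (Measure.pi fun _ => μ) := by
  simp_rw [← Finset.prod_mul_distrib]
  exact Integrable.fintype_prod fun l => (hf l).integrable_mul (hg l)

theorem integral_pi_sq_sum_prod_div_sub_prod {κ : Type*} [Fintype κ] {f : κ → ι → α → ℝ}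
    {g : ι → α → ℝ} (hf : ∀ i l, MemLp (f i l) 2 μ) (hg : ∀ l, MemLp (g l) 2 μ) (c : ℝ) :
    ∫ x, ((∑ i, ∏ l, f i l (x l)) / c - ∏ l, g l (x l)) ^ 2 ∂Measure.pi (fun _ => μ)
      = 1 / c ^ 2 * ∑ i, ∑ j, ∏ l, ∫ y, f i l y * f j l y ∂μ
        - 2 / c * ∑ i, ∏ l, ∫ y, f i l y * g l y ∂μ + ∏ l, ∫ y, g l y * g l y ∂μ := by
  have hexpand : ∀ x : ι → α, ((∑ i, ∏ l, f i l (x l)) / c - ∏ l, g l (x l)) ^ 2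
      = 1 / c ^ 2 * ∑ i, ∑ j, (∏ l, f i l (x l)) * ∏ l, f j l (x l)
        - 2 / c * ∑ i, (∏ l, f i l (x l)) * ∏ l, g l (x l)
        + (∏ l, g l (x l)) * ∏ l, g l (x l) := fun x => by
    simp only [← Finset.sum_mul, ← Finset.mul_sum]; ring
  have hff := fun i j => integrable_pi_prod_mul_prod (hf i) (hf j)
  have hfg := fun i => integrable_pi_prod_mul_prod (hf i) hg
  have hA := (integrable_finsetSum Finset.univ fun i _ =>
    integrable_finsetSum Finset.univ fun j _ => hff i j).const_mul (1 / c ^ 2)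
  have hB := (integrable_finsetSum Finset.univ fun i _ => hfg i).const_mul (2 / c)
  simp_rw [hexpand]
  rw [integral_add (hA.sub hB : Integrable (fun x => _ - _) _) (integrable_pi_prod_mul_prod hg hg),
    integral_sub hA hB, integral_const_mul, integral_const_mul, integral_finsetSum _ fun i _ => hfg i,
    integral_finsetSum _ fun i _ => integrable_finsetSum _ fun j _ => hff i j]
  simp_rw [integral_finsetSum _ fun j _ => hff _ j, integral_pi_prod_mul_prod]

theorem ae_pi_restrict_forall_mem {s : Set α} (hs : MeasurableSet s) :
    ∀ᵐ x ∂Measure.pi (fun _ : ι => μ.restrict s), ∀ l, x l ∈ s :=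
  ae_all_iff.2 fun _ => Measure.tendsto_eval_ae_ae.eventually (ae_restrict_mem hs)

end ProductMeasure

namespace CenteredDiscrepancy

noncomputable def nearestVertex (x : ℝ) : ℝ := if 1 / 2 < x then 1 else 0

def anchoredBox (x : ℝ) : Set ℝ := Icc (min (nearestVertex x) x) (max (nearestVertex x) x)

open scoped Classical in
noncomputable def localDiscrepancy {κ ι : Type*} [Fintype κ] [Fintype ι] (P : κ → ι → ℝ)
    (x : ι → ℝ) : ℝ :=
  ((Finset.univ.filter fun i => ∀ l, P i l ∈ anchoredBox (x l)).card : ℝ) / Fintype.card κ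
    - ∏ l, |x l - nearestVertex (x l)|

/-- The points `x ∈ [0,1]` whose anchored box contains `p` (`mem_anchoredBox_iff`). -/
def anchoredCover (p : ℝ) : Set ℝ := Icc p (1 / 2) ∪ Ioc (1 / 2) p

variable {p q x : ℝ}

theorem abs_sub_nearestVertex (hx : x ∈ Icc 0 1) : |x - nearestVertex x| = min x (1 - x) := by
  obtain ⟨hx0, hx1⟩ := hx
  unfold nearestVertex
  split_ifs with h
  · rw [abs_of_nonpos (by linarith), min_eq_right (by linarith)]; ring
  · rw [sub_zero, abs_of_nonneg hx0, min_eq_left (by linarith)]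

theorem mem_anchoredBox_iff (hp : p ∈ Icc 0 1) (hx : x ∈ Icc 0 1) :
    p ∈ anchoredBox x ↔ x ∈ anchoredCover p := by
  obtain ⟨hp0, hp1⟩ := hp
  obtain ⟨hx0, hx1⟩ := hx
  unfold anchoredBox anchoredCover nearestVertex
  simp only [mem_Icc, mem_union, mem_Ioc]
  split_ifs <;> grind

theorem indicator_anchoredBox (hp : p ∈ Icc 0 1) (hx : x ∈ Icc 0 1) :
    (anchoredBox x).indicator (1 : ℝ → ℝ) p = (anchoredCover p).indicator 1 x := by
  by_cases h : x ∈ anchoredCover p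
  · rw [indicator_of_mem h, indicator_of_mem ((mem_anchoredBox_iff hp hx).2 h), Pi.one_apply,
      Pi.one_apply]
  · rw [indicator_of_notMem h, indicator_of_notMem (mt (mem_anchoredBox_iff hp hx).1 h)]

theorem measurableSet_anchoredCover (p : ℝ) : MeasurableSet (anchoredCover p) :=
  measurableSet_Icc.union measurableSet_Ioc

theorem anchoredCover_subset_Icc (hp : p ∈ Icc 0 1) : anchoredCover p ⊆ Icc 0 1 :=
  union_subset (Icc_subset_Icc hp.1 (by norm_num)) (Ioc_subset_Icc_self.trans
    (Icc_subset_Icc (by norm_num) hp.2))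

theorem anchoredCover_inter :
    anchoredCover p ∩ anchoredCover q = Icc (max p q) (1 / 2) ∪ Ioc (1 / 2) (min p q) := by
  ext x
  simp only [anchoredCover, mem_inter_iff, mem_union, mem_Icc, mem_Ioc, max_le_iff, le_min_iff]
  grind

theorem anchoredCover_of_le (h : p ≤ 1 / 2) : anchoredCover p = Icc p (1 / 2) := by
  rw [anchoredCover, Ioc_eq_empty (not_lt.2 h), union_empty]

theorem anchoredCover_of_lt (h : 1 / 2 < p) : anchoredCover p = Ioc (1 / 2) p := by
  rw [anchoredCover, Icc_eq_empty (not_le.2 h), empty_union]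

local notation "μ" => volume.restrict (Icc (0 : ℝ) 1)

theorem integral_indicator_anchoredCover_mul (hp : p ∈ Icc 0 1) :
    ∫ x, (anchoredCover p).indicator 1 x * (anchoredCover q).indicator 1 x ∂μ
      = |p - 1 / 2| / 2 + |q - 1 / 2| / 2 - |p - q| / 2 := by
  have hsub : anchoredCover p ∩ anchoredCover q ⊆ Icc 0 1 :=
    inter_subset_left.trans (anchoredCover_subset_Icc hp)
  have hdisj : Disjoint (Icc (max p q) (1 / 2)) (Ioc (1 / 2) (min p q)) :=
    disjoint_left.2 fun x hx hx' => not_lt.2 hx.2 hx'.1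
  have hmul : ∀ x, (anchoredCover p).indicator 1 x * (anchoredCover q).indicator 1 x
      = (anchoredCover p ∩ anchoredCover q).indicator (1 : ℝ → ℝ) x := fun x => by
    rw [inter_indicator_one, Pi.mul_apply]
  simp_rw [hmul]
  have hmeas := (measurableSet_anchoredCover p).inter (measurableSet_anchoredCover q)
  rw [integral_indicator_one hmeas, measureReal_restrict_apply hmeas, inter_eq_left.2 hsub,
    anchoredCover_inter, measureReal_union hdisj measurableSet_Ioc measure_Icc_lt_top.ne
      measure_Ioc_lt_top.ne, Real.volume_real_Icc, Real.volume_real_Ioc]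
  simp only [abs_eq_max_neg, max_def, min_def]
  split_ifs <;> linarith

theorem integral_indicator_anchoredCover_mul_min (hp : p ∈ Icc 0 1) :
    ∫ x, (anchoredCover p).indicator 1 x * min x (1 - x) ∂μ
      = |p - 1 / 2| / 2 - |p - 1 / 2| ^ 2 / 2 := by
  have hmul : ∀ x, (anchoredCover p).indicator 1 x * min x (1 - x)
      = (anchoredCover p).indicator (fun x => min x (1 - x)) x := fun x => by
    by_cases hx : x ∈ anchoredCover p <;> simp [hx]
  simp_rw [hmul]
  rw [integral_indicator (measurableSet_anchoredCover p),
    Measure.restrict_restrict (measurableSet_anchoredCover p), inter_eq_left.2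
    (anchoredCover_subset_Icc hp)]
  rcases le_or_gt p (1 / 2) with h | h
  · rw [anchoredCover_of_le h, integral_Icc_eq_integral_Ioc, ← intervalIntegral.integral_of_le h,
      intervalIntegral.integral_congr (g := fun x => x) fun x hx => ?_, integral_id,
      abs_of_nonpos (by linarith)]
    · ring
    · rw [uIcc_of_le h] at hx
      exact min_eq_left (by linarith [hx.2])
  · rw [anchoredCover_of_lt h, ← intervalIntegral.integral_of_le h.le,
      intervalIntegral.integral_congr (g := fun x => 1 - x) fun x hx => ?_,
      intervalIntegral.integral_comp_sub_left (fun x => x), integral_id,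
      abs_of_pos (by linarith)]
    · ring
    · rw [uIcc_of_le h.le] at hx
      exact min_eq_right (by linarith [hx.1])

theorem integral_min_one_sub_mul_self :
    ∫ x, min x (1 - x) * min x (1 - x) ∂μ = 1 / 12 := by
  have hcont : Continuous fun x : ℝ => min x (1 - x) * min x (1 - x) := by fun_prop
  have hleft : EqOn (fun x : ℝ => min x (1 - x) * min x (1 - x)) (fun x => x ^ 2)
      (uIcc 0 (1 / 2)) := fun x hx => by
    dsimp only
    rw [uIcc_of_le (by norm_num)] at hx
    rw [min_eq_left (by linarith [hx.2]), sq]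
  have hright : EqOn (fun x : ℝ => min x (1 - x) * min x (1 - x)) (fun x => (1 - x) ^ 2)
      (uIcc (1 / 2) 1) := fun x hx => by
    dsimp only
    rw [uIcc_of_le (by norm_num)] at hx
    rw [min_eq_right (by linarith [hx.1]), sq]
  rw [integral_Icc_eq_integral_Ioc, ← intervalIntegral.integral_of_le zero_le_one,
    ← intervalIntegral.integral_add_adjacent_intervals (b := 1 / 2)
      (hcont.intervalIntegrable _ _) (hcont.intervalIntegrable _ _),
    intervalIntegral.integral_congr hleft, intervalIntegral.integral_congr hright,
    intervalIntegral.integral_comp_sub_left (fun x => x ^ 2), integral_pow, integral_pow]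
  norm_num

theorem memLp_indicator_anchoredCover (p : ℝ) :
    MemLp ((anchoredCover p).indicator (1 : ℝ → ℝ)) 2 μ :=
  (memLp_const (1 : ℝ)).indicator (measurableSet_anchoredCover p)

theorem memLp_min_one_sub : MemLp (fun x : ℝ => min x (1 - x)) 2 μ := by
  refine .of_bound (by fun_prop : Continuous fun x : ℝ => min x (1 - x)).aestronglyMeasurable 1
    (ae_restrict_of_forall_mem measurableSet_Icc fun x hx => ?_)
  rw [Real.norm_eq_abs, abs_le]
  constructor <;> cases min_choice x (1 - x) <;> grind

theorem integral_localDiscrepancy_sq {κ ι : Type*} [Fintype κ] [Fintype ι] {P : κ → ι → ℝ}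
    (hP : ∀ i l, P i l ∈ Icc 0 1) :
    ∫ x, localDiscrepancy P x ^ 2 ∂Measure.pi (fun _ : ι => μ)
      = 1 / (Fintype.card κ : ℝ) ^ 2 * ∑ i, ∑ j, ∏ l,
          (|P i l - 1 / 2| / 2 + |P j l - 1 / 2| / 2 - |P i l - P j l| / 2)
        - 2 / (Fintype.card κ : ℝ) * ∑ i, ∏ l, (|P i l - 1 / 2| / 2 - |P i l - 1 / 2| ^ 2 / 2)
        + ∏ _l : ι, (1 / 12 : ℝ) := by
  have hcube : ∀ x : ι → ℝ, (∀ l, x l ∈ Icc 0 1) → localDiscrepancy P x ^ 2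
      = ((∑ i, ∏ l, (anchoredCover (P i l)).indicator 1 (x l)) / Fintype.card κ
        - ∏ l, min (x l) (1 - x l)) ^ 2 := fun x hx => by
    rw [localDiscrepancy, Finset.card_filter_forall_mem_eq_sum_prod_indicator]
    simp only [indicator_anchoredBox (hP _ _) (hx _), abs_sub_nearestVertex (hx _)]
  rw [integral_congr_ae ((ae_pi_restrict_forall_mem measurableSet_Icc).mono hcube),
    integral_pi_sq_sum_prod_div_sub_prod (fun i l => memLp_indicator_anchoredCover (P i l))
      (fun _ => memLp_min_one_sub)]
  simp only [integral_indicator_anchoredCover_mul (hP _ _),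
    integral_indicator_anchoredCover_mul_min (hP _ _), integral_min_one_sub_mul_self]

end CenteredDiscrepancy

open CenteredDiscrepancy

open scoped Classical in
theorem centered_L2_discrepancy_formula_general (s n : ℕ) (hn : 1 ≤ n)
    (P : Fin n → Fin s → ℝ) (hP : ∀ i l, P i l ∈ Set.Icc (0 : ℝ) 1) :
    (∑ u ∈ (Finset.univ : Finset (Fin s)).powerset.filter Finset.Nonempty,
        ∫ xu : { l // l ∈ u } → ℝ,
          (((Finset.univ.filter fun i => ∀ l : { l // l ∈ u },
                P i l ∈ Set.Icc
                  (min (if 1 / 2 < xu l then (1 : ℝ) else 0) (xu l))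
                  (max (if 1 / 2 < xu l then (1 : ℝ) else 0) (xu l))).card : ℝ) / n
              - ∏ l : { l // l ∈ u },
                  |xu l - (if 1 / 2 < xu l then (1 : ℝ) else 0)|) ^ 2
          ∂(Measure.pi fun _ : { l // l ∈ u } => volume.restrict (Set.Icc (0 : ℝ) 1)))
      = (13 / 12 : ℝ) ^ s
        - 2 / n * ∑ i, ∏ l, (1 + |P i l - 1 / 2| / 2 - |P i l - 1 / 2| ^ 2 / 2)
        + 1 / (n : ℝ) ^ 2 * ∑ i, ∑ j, ∏ l,
            (1 + |P i l - 1 / 2| / 2 + |P j l - 1 / 2| / 2 - |P i l - P j l| / 2) := by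
  calc _ = ∑ u ∈ (Finset.univ : Finset (Fin s)).powerset.filter Finset.Nonempty,
        (1 / (n : ℝ) ^ 2 * ∑ i, ∑ j, ∏ l ∈ u,
          (|P i l - 1 / 2| / 2 + |P j l - 1 / 2| / 2 - |P i l - P j l| / 2)
        - 2 / n * ∑ i, ∏ l ∈ u, (|P i l - 1 / 2| / 2 - |P i l - 1 / 2| ^ 2 / 2)
        + ∏ _l ∈ u, (1 / 12 : ℝ)) := Finset.sum_congr rfl fun u _ => by
          convert integral_localDiscrepancy_sq (P := fun i (l : u) => P i l) (fun i l => hP i l)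
            using 1
          · unfold localDiscrepancy anchoredBox nearestVertex
            simp only [Fintype.card_fin]
          · simp only [← Finset.prod_coe_sort u, Fintype.card_fin]
    _ = _ := by
      have hn0 : (n : ℝ) ≠ 0 := Nat.cast_ne_zero.2 (by omega)
      simp only [Finset.sum_add_distrib, Finset.sum_sub_distrib, ← Finset.mul_sum]
      rw [Finset.sum_comm (s := Finset.univ.powerset.filter Finset.Nonempty)]
      simp_rw [Finset.sum_comm (s := Finset.univ.powerset.filter Finset.Nonempty),
        Finset.sum_powerset_filter_nonempty_prod_s18, ← add_sub_assoc, ← add_assoc]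
      simp only [Finset.sum_sub_distrib, Finset.sum_const, Finset.card_univ, Fintype.card_fin,
        Finset.prod_const, nsmul_eq_mul, mul_one]
      have h1 : 1 / (n : ℝ) ^ 2 * (n * n) = 1 := by field_simp
      have h2 : 2 / (n : ℝ) * n = 2 := by field_simp
      linear_combination h2 - h1

open scoped Classical in
/-- **Closed form of the centered `L₂` discrepancy** (Hickernell): the boxes are
anchored at the vertex `a(x)` of the unit cube nearest to `x` (`a_l = 1` if
`x_l > 1/2`, else `a_l = 0`), and the sum over all nonempty coordinate projections of
the integrated squared local discrepancy equals the stated closed form. -/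
theorem centered_L2_discrepancy_formula (s n : ℕ) (hs : 1 ≤ s) (hn : 1 ≤ n)
    (P : Fin n → Fin s → ℝ) (hP : ∀ i l, P i l ∈ Set.Icc (0 : ℝ) 1) :
    (∑ u ∈ (Finset.univ : Finset (Fin s)).powerset.filter Finset.Nonempty,
        ∫ xu : { l // l ∈ u } → ℝ,
          (((Finset.univ.filter fun i => ∀ l : { l // l ∈ u },
                P i l ∈ Set.Icc
                  (min (if 1 / 2 < xu l then (1 : ℝ) else 0) (xu l))
                  (max (if 1 / 2 < xu l then (1 : ℝ) else 0) (xu l))).card : ℝ) / n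
              - ∏ l : { l // l ∈ u },
                  |xu l - (if 1 / 2 < xu l then (1 : ℝ) else 0)|) ^ 2
          ∂(Measure.pi fun _ : { l // l ∈ u } => volume.restrict (Set.Icc (0 : ℝ) 1)))
      = (13 / 12 : ℝ) ^ s
        - 2 / n * ∑ i, ∏ l, (1 + |P i l - 1 / 2| / 2 - |P i l - 1 / 2| ^ 2 / 2)
        + 1 / (n : ℝ) ^ 2 * ∑ i, ∑ j, ∏ l,
            (1 + |P i l - 1 / 2| / 2 + |P j l - 1 / 2| / 2 - |P i l - P j l| / 2) :=
  centered_L2_discrepancy_formula_general s n hn P hP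
end
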